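/- Let p = 7, ε = 3 a generator of U_7, M = {1,2,4} the subgroup of order 3, and let y ∈ C^7 be the inverse DFT of the vector z with z(0) = 1/√21, z(1) = 1/√7, z(3) = 1/√7, and z(ℓ) = 0 otherwise. Then { T_k D_m y : m ∈ M, k ∈ Z_7 } is a Parseval frame for C^7: Σ_{m∈M} Σ_{k=0}^{6} |⟨x, T_k D_m y⟩|² = ‖x‖² for all x ∈ C^7. -/

import Mathlib

/-!
The unitary DFT turns `T_k` into multiplication by a character and `D_m` into the substitution
`ℓ ↦ m ℓ`, so by Plancherel `⟨x, T_k D_m y⟩` is, as a function of `k`, an inverse Fourier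
transform of `ℓ ↦ x̂ ℓ * conj (ŷ (m ℓ))`. Parseval in `k` then gives
`∑ m k, |⟨x, T_k D_m y⟩|² = p ∑ ℓ, |x̂ ℓ|² ∑ m ∈ M, |ŷ (m ℓ)|²`, so the system is a Parseval frame
as soon as `p ∑ m ∈ M, |ŷ (m ℓ)|² = 1` for every `ℓ`. For the given `y` this holds because `M`
fixes `0` and the support `{1, 3}` of `ŷ` away from `0` meets each nonzero coset `ℓ M` exactly once.
-/

open scoped BigOperators Classical Pointwise
open Finset

noncomputable section

/-- Translation operator on C^p. -/
def Tr {p : ℕ} (k : ZMod p) (x : ZMod p → ℂ) : ZMod p → ℂ := fun j => x (j - k)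

/-- Cyclic dilation operator on C^p. -/
def Dil {p : ℕ} (m : ZMod p) (x : ZMod p → ℂ) : ZMod p → ℂ := fun j => x (m⁻¹ * j)

/-- Unitary discrete Fourier transform on C^p. -/
def dft (p : ℕ) [NeZero p] (x : ZMod p → ℂ) : ZMod p → ℂ := fun ℓ =>
  (Real.sqrt p : ℂ)⁻¹ *
    ∑ k : ZMod p, x k * Complex.exp (-(2 * Real.pi * Complex.I * (ℓ.val * k.val)) / p)

/-- Inner product on C^p. -/
def ip (p : ℕ) [NeZero p] (x y : ZMod p → ℂ) : ℂ :=
  ∑ g : ZMod p, x g * (starRingEnd ℂ) (y g)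

open scoped ZMod ComplexConjugate

namespace ZMod

variable {N : ℕ} [NeZero N]

lemma sum_dft_mul_conj_dft (u v : ZMod N → ℂ) :
    ∑ ℓ, 𝓕 u ℓ * conj (𝓕 v ℓ) = N * ip N u v := by
  have orthogonality (j i : ZMod N) :
      ∑ ℓ : ZMod N, stdAddChar (-(j * ℓ)) * conj (stdAddChar (-(i * ℓ))) =
        if i = j then (N : ℂ) else 0 := by
    simp_rw [← AddChar.map_neg_eq_conj, ← AddChar.map_add_eq_mul,
      show ∀ ℓ : ZMod N, -(j * ℓ) + -(-(i * ℓ)) = ℓ * (i - j) from fun ℓ => by ring,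
      AddChar.sum_mulShift _ (isPrimitive_stdAddChar N), sub_eq_zero, ZMod.card]
    split_ifs <;> simp
  simp_rw [dft_apply, smul_eq_mul, map_sum, sum_mul_sum, ip, mul_sum]
  rw [sum_comm]
  refine sum_congr rfl fun j _ => ?_
  rw [sum_comm]
  simp_rw [map_mul, show ∀ a b c d : ℂ, a * b * (c * d) = b * d * (a * c) from
    fun _ _ _ _ => by ring, ← mul_sum, orthogonality, mul_ite, mul_zero, sum_ite_eq', mem_univ,
    if_true]
  ring

lemma sum_norm_sq_dft (u : ZMod N → ℂ) : ∑ ℓ, ‖𝓕 u ℓ‖ ^ 2 = N * ∑ j, ‖u j‖ ^ 2 := by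
  apply Complex.ofReal_injective
  push_cast
  simp_rw [← Complex.mul_conj']
  exact sum_dft_mul_conj_dft u u

lemma dft_tr (k : ZMod N) (f : ZMod N → ℂ) (ℓ : ZMod N) :
    𝓕 (Tr k f) ℓ = stdAddChar (-(k * ℓ)) * 𝓕 f ℓ := by
  simp_rw [dft_apply, smul_eq_mul, mul_sum]
  refine Fintype.sum_equiv (Equiv.subRight k) _ _ fun j => ?_
  rw [Tr, Equiv.subRight_apply, ← mul_assoc, ← AddChar.map_add_eq_mul]
  ring_nf

lemma dft_dil {m : ZMod N} (hm : IsUnit m) (f : ZMod N → ℂ) (ℓ : ZMod N) :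
    𝓕 (Dil m f) ℓ = 𝓕 f (m * ℓ) := by
  obtain ⟨u, rfl⟩ := hm
  unfold Dil
  rw [inv_coe_unit, dft_comp_unitMul, inv_inv]

lemma ip_tr_dil_eq_dft {m : ZMod N} (hm : IsUnit m) (x y : ZMod N → ℂ) (k : ZMod N) :
    ip N x (Tr k (Dil m y)) = (N : ℂ)⁻¹ * 𝓕 (fun ℓ => 𝓕 x ℓ * conj (𝓕 y (m * ℓ))) (-k) := by
  rw [eq_inv_mul_iff_mul_eq₀ (NeZero.ne' (N : ℂ)).symm, ← sum_dft_mul_conj_dft, dft_apply]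
  refine sum_congr rfl fun ℓ _ => ?_
  rw [dft_tr, dft_dil hm, smul_eq_mul, map_mul, ← AddChar.map_neg_eq_conj]
  ring_nf

lemma sum_norm_sq_ip_tr_dil {m : ZMod N} (hm : IsUnit m) (x y : ZMod N → ℂ) :
    ∑ k, ‖ip N x (Tr k (Dil m y))‖ ^ 2 = (N : ℝ)⁻¹ * ∑ ℓ, ‖𝓕 x ℓ‖ ^ 2 * ‖𝓕 y (m * ℓ)‖ ^ 2 := by
  simp_rw [ip_tr_dil_eq_dft hm, norm_mul, mul_pow, ← mul_sum, norm_inv, Complex.norm_natCast]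
  set a : ZMod N → ℂ := fun ℓ => 𝓕 x ℓ * conj (𝓕 y (m * ℓ))
  have sum_comp_neg : ∑ k, ‖𝓕 a (-k)‖ ^ 2 = ∑ k, ‖𝓕 a k‖ ^ 2 :=
    Fintype.sum_equiv (Equiv.neg _) _ _ fun _ => rfl
  rw [sum_comp_neg, sum_norm_sq_dft]
  simp only [a, norm_mul, Complex.norm_conj, mul_pow]
  field_simp

end ZMod

variable {N : ℕ} [NeZero N]

lemma dft_eq_inv_sqrt_mul (x : ZMod N → ℂ) (ℓ : ZMod N) :
    dft N x ℓ = ((√N : ℝ) : ℂ)⁻¹ * 𝓕 x ℓ := by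
  rw [dft, ZMod.dft_apply]
  congr 1
  refine sum_congr rfl fun k _ => ?_
  have h_cast : -(k * ℓ) = ((-(k.val * ℓ.val : ℕ) : ℤ) : ZMod N) := by
    push_cast
    rw [ZMod.natCast_zmod_val, ZMod.natCast_zmod_val]
  rw [h_cast, ZMod.stdAddChar_coe, smul_eq_mul, mul_comm]
  congr 1
  push_cast
  ring_nf

lemma norm_inv_sqrt_sq {a : ℝ} (ha : 0 ≤ a) : ‖((√a : ℝ) : ℂ)⁻¹‖ ^ 2 = a⁻¹ := by
  rw [norm_inv, Complex.norm_real, Real.norm_eq_abs, abs_of_nonneg (Real.sqrt_nonneg _),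
    inv_pow, Real.sq_sqrt ha]

lemma norm_sq_dft_eq (x : ZMod N → ℂ) (ℓ : ZMod N) :
    ‖𝓕 x ℓ‖ ^ 2 = N * ‖dft N x ℓ‖ ^ 2 := by
  rw [dft_eq_inv_sqrt_mul, norm_mul, mul_pow, norm_inv_sqrt_sq (Nat.cast_nonneg _),
    mul_inv_cancel_left₀ (NeZero.ne' (N : ℝ)).symm]

theorem sum_sum_norm_sq_ip_tr_dil_eq {M : Finset (ZMod N)} (hM : ∀ m ∈ M, IsUnit m)
    {y : ZMod N → ℂ} (hy : ∀ ℓ, N * ∑ m ∈ M, ‖dft N y (m * ℓ)‖ ^ 2 = 1) (x : ZMod N → ℂ) :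
    ∑ m ∈ M, ∑ k, ‖ip N x (Tr k (Dil m y))‖ ^ 2 = ∑ g, ‖x g‖ ^ 2 := by
  rw [sum_congr rfl fun m hm => ZMod.sum_norm_sq_ip_tr_dil (hM m hm) x y, ← mul_sum, sum_comm]
  simp_rw [← mul_sum, norm_sq_dft_eq y, ← mul_sum, hy, mul_one, ZMod.sum_norm_sq_dft]
  exact inv_mul_cancel_left₀ (NeZero.ne' (N : ℝ)).symm _

theorem parseval_wavelet_frame_seven
    (z y : ZMod 7 → ℂ)
    (hz : z = fun ℓ =>
      if ℓ = 0 then ((Real.sqrt 21 : ℝ) : ℂ)⁻¹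
      else if ℓ = 1 then ((Real.sqrt 7 : ℝ) : ℂ)⁻¹
      else if ℓ = 3 then ((Real.sqrt 7 : ℝ) : ℂ)⁻¹
      else 0)
    (hy : dft 7 y = z) (x : ZMod 7 → ℂ) :
    ∑ m ∈ ({1, 2, 4} : Finset (ZMod 7)), ∑ k : ZMod 7,
        ‖ip 7 x (Tr k (Dil m y))‖ ^ 2 = ∑ g : ZMod 7, ‖x g‖ ^ 2 := by
  refine sum_sum_norm_sq_ip_tr_dil_eq (fun m hm => by fin_cases hm <;> decide) (fun ℓ => ?_) x
  rw [hy, hz, sum_insert (by decide), sum_insert (by decide), sum_singleton]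
  fin_cases ℓ <;> norm_num +decide [norm_inv_sqrt_sq]
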